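/- For every doubling measure ω on ℝⁿ there exists a constant c_ω > 0 such that for every cube I the energy E(I,ω)² = (1/2) E_I^{ω} E_I^{ω} |x−x'|²/|I|^{2/n} ≥ c_ω; consequently, for ω doubling, the pivotal condition V(ω,σ)^p and the energy condition E(ω,σ)^p are equivalent. -/

import Mathlib

/-! Let `J₋, J₊` be the cubes of radius `r/4` centred at `c ∓ (r/2, …, r/2)` inside the cube
`I = Q(c, r)`. Points of `J₋` and `J₊` are at distance at least `r/2`, so the integrand of
`E(I,ω)²` is at least `1/16` on `J₋ × J₊`; and three doublings of either corner cube cover `I`,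
so `ω(I) ≤ K³ ω(J_±)`. Hence `E(I,ω)² ≥ ω(J₋) ω(J₊) / (32 ω(I)²) ≥ 1/(32 K⁶)`. Since also
`E(I,ω)² ≤ 1`, the sums defining the pivotal and the energy conditions are comparable term by
term. -/

open MeasureTheory ENNReal

structure Cube (n : ℕ) where
  c : Fin n → ℝ
  r : ℝ
  hr : 0 < r

namespace Cube

def set {n : ℕ} (I : Cube n) : Set (Fin n → ℝ) :=
  {x | ∀ i, I.c i - I.r ≤ x i ∧ x i < I.c i + I.r}

noncomputable def side {n : ℕ} (I : Cube n) : ℝ := 2 * I.r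

noncomputable def vol {n : ℕ} (I : Cube n) : ℝ := (2 * I.r) ^ n

def double {n : ℕ} (I : Cube n) : Cube n := ⟨I.c, 2 * I.r, by have := I.hr; linarith⟩

def triple {n : ℕ} (I : Cube n) : Cube n := ⟨I.c, 3 * I.r, by have := I.hr; linarith⟩

end Cube

noncomputable def poisson {n : ℕ} (I : Cube n) (ω : Measure (Fin n → ℝ)) : ℝ≥0∞ :=
  ∫⁻ x, (ENNReal.ofReal (I.side / (I.side + Metric.infDist x I.set) ^ 2)) ^ n ∂ω

noncomputable def maximal {n : ℕ} (μ : Measure (Fin n → ℝ)) (x : Fin n → ℝ) : ℝ≥0∞ :=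
  ⨆ (I : Cube n) (_ : x ∈ I.set), μ I.set / ENNReal.ofReal I.vol

noncomputable def wMass {n : ℕ} (w : (Fin n → ℝ) → ℝ≥0∞) (E : Set (Fin n → ℝ)) : ℝ≥0∞ :=
  ∫⁻ x in E, w x


/-- The squared energy `E(I,ω)² = (1/2) 𝔼_I^ω 𝔼_I^ω |x-x'|²/|I|^{2/n}`. -/
noncomputable def energySq {n : ℕ} (I : Cube n) (ω : Measure (Fin n → ℝ)) : ℝ≥0∞ :=
  (∫⁻ x in I.set, ∫⁻ y in I.set, ENNReal.ofReal (dist x y ^ 2 / I.side ^ 2) ∂ω ∂ω) /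
    (2 * (ω I.set) ^ 2)

/-- The pivotal condition `V(ω,σ)^p < ∞`. -/
def PivotalCond {n : ℕ} (p : ℝ) (ω σ : Measure (Fin n → ℝ)) : Prop :=
  ∃ C > (0:ℝ), ∀ I₀ : Cube n, ∀ Ir : ℕ → Cube n,
    (Pairwise fun r s => Disjoint (Ir r).set (Ir s).set) →
    (⋃ r, (Ir r).set) = I₀.set →
    ∑' r, ω (Ir r).set * (poisson (Ir r) (σ.restrict I₀.set)) ^ p ≤
      ENNReal.ofReal C * σ I₀.set

/-- The energy condition `E(ω,σ)^p < ∞`. -/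
def EnergyCond {n : ℕ} (p : ℝ) (ω σ : Measure (Fin n → ℝ)) : Prop :=
  ∃ C > (0:ℝ), ∀ I₀ : Cube n, ∀ Ir : ℕ → Cube n,
    (Pairwise fun r s => Disjoint (Ir r).set (Ir s).set) →
    (⋃ r, (Ir r).set) = I₀.set →
    ∑' r, ω (Ir r).set * energySq (Ir r) ω * (poisson (Ir r) (σ.restrict I₀.set)) ^ p ≤
      ENNReal.ofReal C * σ I₀.set

namespace Cube

variable {n : ℕ}

theorem set_subset_set {I J : Cube n}
    (h : ∀ i, J.c i - J.r ≤ I.c i - I.r ∧ I.c i + I.r ≤ J.c i + J.r) : I.set ⊆ J.set := by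
  intro x hx i
  obtain ⟨h₁, h₂⟩ := hx i
  obtain ⟨g₁, g₂⟩ := h i
  exact ⟨by linarith, by linarith⟩

theorem set_eq_pi (I : Cube n) :
    I.set = Set.univ.pi fun i => Set.Ico (I.c i - I.r) (I.c i + I.r) := by
  ext x
  simp [Cube.set]

theorem measurableSet_set (I : Cube n) : MeasurableSet I.set := by
  rw [set_eq_pi]
  exact MeasurableSet.univ_pi fun _ => measurableSet_Ico

theorem abs_sub_c_le {I : Cube n} {x : Fin n → ℝ} (hx : x ∈ I.set) (i : Fin n) :
    |x i - I.c i| ≤ I.r := by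
  obtain ⟨h₁, h₂⟩ := hx i
  rw [abs_le]
  constructor <;> linarith

theorem set_subset_closedBall (I : Cube n) : I.set ⊆ Metric.closedBall I.c I.r := fun _ hx =>
  Metric.mem_closedBall.2 <| (dist_pi_le_iff I.hr.le).2 fun i => abs_sub_c_le hx i

theorem dist_le_side {I : Cube n} {x y : Fin n → ℝ} (hx : x ∈ I.set) (hy : y ∈ I.set) :
    dist x y ≤ I.side := by
  refine (dist_pi_le_iff (by unfold side; linarith [I.hr])).2 fun i => ?_
  have := abs_sub_le (x i) (I.c i) (y i)
  rw [abs_sub_comm (I.c i)] at this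
  rw [Real.dist_eq, side]
  linarith [abs_sub_c_le hx i, abs_sub_c_le hy i]

theorem iterate_double_c (I : Cube n) (k : ℕ) : (double^[k] I).c = I.c := by
  induction k with
  | zero => rfl
  | succ k ih => rw [Function.iterate_succ_apply', ← ih]; rfl

theorem iterate_double_r (I : Cube n) (k : ℕ) : (double^[k] I).r = 2 ^ k * I.r := by
  induction k with
  | zero => simp
  | succ k ih => rw [Function.iterate_succ_apply', pow_succ', mul_assoc, ← ih]; rfl

theorem iUnion_iterate_double_set (I : Cube n) : ⋃ k, (double^[k] I).set = Set.univ := by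
  refine Set.eq_univ_of_forall fun x => Set.mem_iUnion.2 ?_
  obtain ⟨k, hk⟩ := pow_unbounded_of_one_lt (dist x I.c / I.r) one_lt_two
  rw [div_lt_iff₀ I.hr] at hk
  refine ⟨k, fun i => ?_⟩
  have hi : |x i - I.c i| < 2 ^ k * I.r := (dist_le_pi_dist x I.c i).trans_lt hk
  rw [iterate_double_c, iterate_double_r]
  constructor <;> linarith [abs_lt.1 hi]

/-- For `s = ±1`, subcubes of `I` in two opposite corners. -/
noncomputable def corner (I : Cube n) (s : ℝ) : Cube n :=
  ⟨fun i => I.c i + s * (I.r / 2), I.r / 4, by linarith [I.hr]⟩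

theorem corner_set_subset {s : ℝ} (hs : |s| ≤ 1) (I : Cube n) : (I.corner s).set ⊆ I.set := by
  obtain ⟨hs₁, hs₂⟩ := abs_le.1 hs
  refine set_subset_set fun i => ?_
  simp only [corner]
  constructor <;> nlinarith [I.hr]

theorem set_subset_iterate_double_corner {s : ℝ} (hs : |s| ≤ 1) (I : Cube n) :
    I.set ⊆ (double^[3] (I.corner s)).set := by
  obtain ⟨hs₁, hs₂⟩ := abs_le.1 hs
  refine set_subset_set fun i => ?_
  rw [iterate_double_c, iterate_double_r]
  simp only [corner]
  constructor <;> nlinarith [I.hr]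

theorem half_r_le_dist_of_mem_corner (hn : 0 < n) {I : Cube n} {x y : Fin n → ℝ}
    (hx : x ∈ (I.corner (-1)).set) (hy : y ∈ (I.corner 1).set) : I.r / 2 ≤ dist x y := by
  let i : Fin n := ⟨0, hn⟩
  have hxi := (hx i).2
  have hyi := (hy i).1
  simp only [corner] at hxi hyi
  calc I.r / 2 ≤ |x i - y i| := by rw [abs_sub_comm]; exact le_abs.2 (Or.inl (by linarith))
    _ ≤ dist x y := dist_le_pi_dist x y i

theorem measure_set_lt_top (ω : Measure (Fin n → ℝ)) [IsLocallyFiniteMeasure ω] (I : Cube n) :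
    ω I.set < ⊤ :=
  (measure_mono I.set_subset_closedBall).trans_lt (isCompact_closedBall _ _).measure_lt_top

end Cube

section Doubling

variable {n : ℕ} {ω : Measure (Fin n → ℝ)} {K : ℝ}
  (hdoubling : ∀ I : Cube n, ω I.double.set ≤ ENNReal.ofReal K * ω I.set)
include hdoubling

theorem measure_iterate_double_le (I : Cube n) (k : ℕ) :
    ω (Cube.double^[k] I).set ≤ ENNReal.ofReal K ^ k * ω I.set := by
  induction k with
  | zero => simp
  | succ k ih =>
    rw [Function.iterate_succ_apply', pow_succ', mul_assoc]
    exact (hdoubling _).trans (by gcongr)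

theorem measure_set_ne_zero_of_doubling (hω : ω ≠ 0) (I : Cube n) : ω I.set ≠ 0 := by
  intro hI
  have hnull : ∀ k, ω (Cube.double^[k] I).set = 0 := fun k =>
    le_antisymm ((measure_iterate_double_le hdoubling I k).trans (by rw [hI, mul_zero])) bot_le
  apply hω
  rw [← Measure.measure_univ_eq_zero, ← I.iUnion_iterate_double_set]
  exact measure_iUnion_null hnull

theorem measure_set_le_corner {s : ℝ} (hs : |s| ≤ 1) (I : Cube n) :
    ω I.set ≤ ENNReal.ofReal K ^ 3 * ω (I.corner s).set :=
  (measure_mono (I.set_subset_iterate_double_corner hs)).trans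
    (measure_iterate_double_le hdoubling _ 3)

end Doubling

section DoubleIntegral

variable {α : Type*} [MeasurableSpace α] {μ : Measure α} {f : α → α → ℝ≥0∞} {s t : Set α}
  {c : ℝ≥0∞}

theorem mul_measure_mul_le_setLIntegral_setLIntegral (hs : MeasurableSet s)
    (ht : MeasurableSet t) (hc : ∀ x ∈ s, ∀ y ∈ t, c ≤ f x y) :
    c * μ s * μ t ≤ ∫⁻ x in s, ∫⁻ y in t, f x y ∂μ ∂μ :=
  calc c * μ s * μ t = ∫⁻ _ in s, ∫⁻ _ in t, c ∂μ ∂μ := by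
        simp only [setLIntegral_const]; ring
    _ ≤ _ := setLIntegral_mono' hs fun x hx => setLIntegral_mono' ht (hc x hx)

theorem setLIntegral_setLIntegral_le_mul_measure_mul (hs : MeasurableSet s)
    (ht : MeasurableSet t) (hc : ∀ x ∈ s, ∀ y ∈ t, f x y ≤ c) :
    ∫⁻ x in s, ∫⁻ y in t, f x y ∂μ ∂μ ≤ c * μ s * μ t :=
  calc ∫⁻ x in s, ∫⁻ y in t, f x y ∂μ ∂μ ≤ ∫⁻ _ in s, ∫⁻ _ in t, c ∂μ ∂μ :=
        setLIntegral_mono' hs fun x hx => setLIntegral_mono' ht (hc x hx)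
    _ = c * μ s * μ t := by simp only [setLIntegral_const]; ring

end DoubleIntegral

section Energy

variable {n : ℕ}

theorem energySq_le_one (I : Cube n) (ω : Measure (Fin n → ℝ)) : energySq I ω ≤ 1 := by
  have hside : 0 < I.side := by unfold Cube.side; linarith [I.hr]
  have hkernel : ∀ x ∈ I.set, ∀ y ∈ I.set, ENNReal.ofReal (dist x y ^ 2 / I.side ^ 2) ≤ 1 :=
    fun x hx y hy => ENNReal.ofReal_le_one.2 <| (div_le_one (by positivity)).2 <|
      pow_le_pow_left₀ dist_nonneg (Cube.dist_le_side hx hy) 2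
  refine ENNReal.div_le_of_le_mul ?_
  calc _ ≤ 1 * ω I.set * ω I.set :=
        setLIntegral_setLIntegral_le_mul_measure_mul I.measurableSet_set I.measurableSet_set
          hkernel
    _ ≤ 1 * (2 * ω I.set ^ 2) := by
        rw [sq, one_mul, one_mul, two_mul]; exact le_add_self

theorem measure_corner_mul_le_lintegral (hn : 0 < n) (I : Cube n) (ω : Measure (Fin n → ℝ)) :
    ENNReal.ofReal (1 / 16) * ω (I.corner (-1)).set * ω (I.corner 1).set ≤
      ∫⁻ x in I.set, ∫⁻ y in I.set, ENNReal.ofReal (dist x y ^ 2 / I.side ^ 2) ∂ω ∂ω := by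
  have hkernel : ∀ x ∈ (I.corner (-1)).set, ∀ y ∈ (I.corner 1).set,
      ENNReal.ofReal (1 / 16) ≤ ENNReal.ofReal (dist x y ^ 2 / I.side ^ 2) := by
    intro x hx y hy
    have hd := Cube.half_r_le_dist_of_mem_corner hn hx hy
    refine ENNReal.ofReal_le_ofReal ?_
    rw [Cube.side, le_div_iff₀ (by nlinarith [I.hr])]
    nlinarith [I.hr]
  calc _ ≤ ∫⁻ x in (I.corner (-1)).set, ∫⁻ y in (I.corner 1).set,
          ENNReal.ofReal (dist x y ^ 2 / I.side ^ 2) ∂ω ∂ω :=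
        mul_measure_mul_le_setLIntegral_setLIntegral (Cube.measurableSet_set _)
          (Cube.measurableSet_set _) hkernel
    _ ≤ _ := (lintegral_mono fun _ => lintegral_mono_set
          (I.corner_set_subset (abs_one.le))).trans
        (lintegral_mono_set (I.corner_set_subset (by norm_num)))

theorem ofReal_le_energySq_of_doubling (hn : 0 < n) {ω : Measure (Fin n → ℝ)}
    [IsLocallyFiniteMeasure ω] (hω : ω ≠ 0) {K : ℝ} (hK : 0 < K)
    (hdoubling : ∀ I : Cube n, ω I.double.set ≤ ENNReal.ofReal K * ω I.set) (I : Cube n) :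
    ENNReal.ofReal (1 / (32 * K ^ 6)) ≤ energySq I ω := by
  have hI₀ := measure_set_ne_zero_of_doubling hdoubling hω I
  have hI_top := (I.measure_set_lt_top ω).ne
  have hconst : ENNReal.ofReal (1 / (32 * K ^ 6)) * 2 * ENNReal.ofReal K ^ 3 *
      ENNReal.ofReal K ^ 3 = ENNReal.ofReal (1 / 16) := by
    rw [← ENNReal.ofReal_pow hK.le, ← ENNReal.ofReal_ofNat 2, ← ENNReal.ofReal_mul (by positivity),
      ← ENNReal.ofReal_mul (by positivity), ← ENNReal.ofReal_mul (by positivity)]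
    congr 1
    field_simp
    ring
  rw [energySq, ENNReal.le_div_iff_mul_le (Or.inl (by simp [hI₀]))
    (Or.inl (ENNReal.mul_ne_top ENNReal.ofNat_ne_top (ENNReal.pow_ne_top hI_top)))]
  calc ENNReal.ofReal (1 / (32 * K ^ 6)) * (2 * ω I.set ^ 2)
      = ENNReal.ofReal (1 / (32 * K ^ 6)) * 2 * ω I.set * ω I.set := by ring
    _ ≤ ENNReal.ofReal (1 / (32 * K ^ 6)) * 2 * (ENNReal.ofReal K ^ 3 * ω (I.corner (-1)).set) *
          (ENNReal.ofReal K ^ 3 * ω (I.corner 1).set) := by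
        gcongr <;> exact measure_set_le_corner hdoubling (by norm_num) I
    _ = ENNReal.ofReal (1 / 16) * ω (I.corner (-1)).set * ω (I.corner 1).set := by
        rw [← hconst]; ring
    _ ≤ _ := measure_corner_mul_le_lintegral hn I ω

end Energy

section Conditions

variable {n : ℕ} {p : ℝ} {ω σ : Measure (Fin n → ℝ)}

theorem PivotalCond.energyCond (h : PivotalCond p ω σ) : EnergyCond p ω σ := by
  obtain ⟨C, hC, hsum⟩ := h
  refine ⟨C, hC, fun I₀ Ir hdisj hcover => (ENNReal.tsum_le_tsum fun r => ?_).trans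
    (hsum I₀ Ir hdisj hcover)⟩
  calc _ ≤ ω (Ir r).set * 1 * poisson (Ir r) (σ.restrict I₀.set) ^ p := by
        gcongr; exact energySq_le_one _ _
    _ = _ := by rw [mul_one]

theorem EnergyCond.pivotalCond {c : ℝ} (hc : 0 < c)
    (hlow : ∀ I : Cube n, ENNReal.ofReal c ≤ energySq I ω) (h : EnergyCond p ω σ) :
    PivotalCond p ω σ := by
  obtain ⟨C, hC, hsum⟩ := h
  refine ⟨C / c, by positivity, fun I₀ Ir hdisj hcover => ?_⟩
  have hc' : ENNReal.ofReal c ≠ 0 := (ENNReal.ofReal_pos.2 hc).ne'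
  rw [ENNReal.ofReal_div_of_pos hc, ← ENNReal.mul_div_right_comm,
    ENNReal.le_div_iff_mul_le (Or.inl hc') (Or.inl ENNReal.ofReal_ne_top), mul_comm,
    ← ENNReal.tsum_mul_left]
  refine (ENNReal.tsum_le_tsum fun r => ?_).trans (hsum I₀ Ir hdisj hcover)
  calc _ = ω (Ir r).set * ENNReal.ofReal c * poisson (Ir r) (σ.restrict I₀.set) ^ p := by ring
    _ ≤ _ := by gcongr; exact hlow _

end Conditions

theorem stmt_14_general (n : ℕ) (hn : 0 < n) (p : ℝ)
    (ω : Measure (Fin n → ℝ)) [IsLocallyFiniteMeasure ω] (hω : ω ≠ 0)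
    (K : ℝ) (hK : 0 < K)
    (hdoubling : ∀ I : Cube n, ω I.double.set ≤ ENNReal.ofReal K * ω I.set) :
    (∃ c > (0:ℝ), ∀ I : Cube n, ENNReal.ofReal c ≤ energySq I ω) ∧
    (∀ σ : Measure (Fin n → ℝ), (PivotalCond p ω σ ↔ EnergyCond p ω σ)) := by
  have hlow := ofReal_le_energySq_of_doubling hn hω hK hdoubling
  have hc : (0 : ℝ) < 1 / (32 * K ^ 6) := by positivity
  exact ⟨⟨_, hc, hlow⟩, fun σ => ⟨PivotalCond.energyCond, EnergyCond.pivotalCond hc hlow⟩⟩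

/-- For a (nonzero, locally finite) doubling measure `ω` the energy
`E(I,ω)²` is bounded below by a positive constant uniformly over all cubes; consequently,
for doubling `ω` the pivotal condition `V(ω,σ)^p` and the energy condition `E(ω,σ)^p`
are equivalent. -/
theorem stmt_14 (n : ℕ) (hn : 0 < n) (p : ℝ) (hp : 1 < p)
    (ω : Measure (Fin n → ℝ)) [IsLocallyFiniteMeasure ω] (hω : ω ≠ 0)
    (K : ℝ) (hK : 0 < K)
    (hdoubling : ∀ I : Cube n, ω I.double.set ≤ ENNReal.ofReal K * ω I.set) :
    (∃ c > (0:ℝ), ∀ I : Cube n, ENNReal.ofReal c ≤ energySq I ω) ∧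
    (∀ σ : Measure (Fin n → ℝ), (PivotalCond p ω σ ↔ EnergyCond p ω σ)) :=
  stmt_14_general n hn p ω hω K hK hdoubling
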